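/- Let R be a Polish ring and φ : R → ℂ a ring isomorphism. If there exists a Borel set Ω ⊆ ℂ whose interior is nonempty and whose complement also has nonempty interior, such that φ⁻¹[Ω] has the Baire property in R, then φ is a homeomorphism (a topological isomorphism). -/

import Mathlib

/-!
Since `φ` is a ring isomorphism, the preimage under `φ` of every affine image `a • Ω + b`
(`a ≠ 0`) of `Ω` has the Baire property. Normalize `Ω` to contain a ball around `0` and to miss
a ball around `1`; then the intersection `V` of its dilations by a countable dense set of
`c` with `‖c‖ ≥ 1` is bounded and still has nonempty interior. Countably many translates of `V`
cover `ℂ`, so one of their preimages is nonmeagre, and Pettis' theorem shows that `φ` maps a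
neighbourhood of `0` into the bounded set `V - V`; scaling by small elements gives continuity.
For the inverse, a continuous bijection between Polish spaces is a Borel isomorphism
(Lusin–Souslin), and the same Pettis argument makes a Borel homomorphism continuous.
-/

open Set Filter Topology Metric Bornology
open scoped Pointwise

section BaireGroup

theorem Filter.EventuallyEq.isMeagre_iff {X : Type*} [TopologicalSpace X] {s t : Set X}
    (h : s =ᵇ t) : IsMeagre s ↔ IsMeagre t :=
  congr_sets h.compl.mem_iff

variable {G : Type*} [TopologicalSpace G] [AddCommGroup G] [IsTopologicalAddGroup G]
  [BaireSpace G]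

theorem BaireMeasurableSet.sub_mem_nhds_zero {A : Set G} (hA : BaireMeasurableSet A)
    (hA' : ¬IsMeagre A) : A - A ∈ 𝓝 0 := by
  obtain ⟨u, hu, hAu⟩ := hA.residualEq_isOpen
  obtain ⟨x, hx⟩ := nonempty_of_not_isMeagre (hAu.isMeagre_iff.not.1 hA')
  refine mem_of_superset (hu.sub_left.mem_nhds ⟨x, hx, x, hx, sub_self x⟩) ?_
  rintro _ ⟨x, hx, y, hy, rfl⟩
  have htr : (· - (x - y)) ⁻¹' A =ᵇ (· - (x - y)) ⁻¹' u :=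
    hAu.comp_tendsto <|
      tendsto_residual_of_isOpenMap (continuous_sub_right _) (isOpenMap_sub_right _)
  have hopen : IsOpen (u ∩ (· - (x - y)) ⁻¹' u) :=
    hu.inter (hu.preimage (continuous_sub_right _))
  obtain ⟨z, hz, hzg⟩ := nonempty_of_not_isMeagre <|
    (hAu.inter htr).isMeagre_iff.not.2 (not_isMeagre_of_isOpen hopen ⟨x, hx, by simpa⟩)
  exact ⟨z, hz, z - (x - y), hzg, sub_sub_cancel _ _⟩

variable {H : Type*} [TopologicalSpace H] [AddCommGroup H] [IsTopologicalAddGroup H]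
  [TopologicalSpace.SeparableSpace H]

/-- Countably many translates of `V` cover `H`, so one of their preimages is nonmeagre. -/
theorem AddMonoidHom.exists_mem_nhds_zero_image_subset_sub (f : G →+ H) {V : Set H}
    (hV : (interior V).Nonempty) (hf : ∀ q, BaireMeasurableSet (f ⁻¹' ((· + q) ⁻¹' V))) :
    ∃ U ∈ 𝓝 (0 : G), f '' U ⊆ V - V := by
  obtain ⟨D, hDc, hDd⟩ := TopologicalSpace.exists_countable_dense H
  have hcov : (⋃ q ∈ D, f ⁻¹' ((· + q) ⁻¹' V)) = univ := by
    refine eq_univ_of_forall fun x => mem_iUnion₂.2 ?_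
    obtain ⟨v, hv⟩ := hV
    obtain ⟨q, hq, hqD⟩ := hDd.inter_open_nonempty _
      (isOpen_interior.preimage (continuous_const_add (f x))) ⟨v - f x, by simpa using hv⟩
    exact ⟨q, hqD, interior_subset (s := V) hq⟩
  obtain ⟨q, -, hq⟩ := exists_of_not_isMeagre_biUnion hDc
    (hcov ▸ not_isMeagre_of_isOpen isOpen_univ univ_nonempty)
  refine ⟨_, (hf q).sub_mem_nhds_zero hq, ?_⟩
  rintro _ ⟨_, ⟨a, ha, b, hb, rfl⟩, rfl⟩
  exact ⟨f a + q, ha, f b + q, hb, (add_sub_add_right_eq_sub _ _ _).trans (map_sub f a b).symm⟩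

theorem AddMonoidHom.continuous_of_baireMeasurableSet_preimage (f : G →+ H)
    (hf : ∀ V, IsOpen V → BaireMeasurableSet (f ⁻¹' V)) : Continuous f := by
  refine continuous_of_continuousAt_zero f ?_
  rw [ContinuousAt, map_zero]
  intro W hW
  obtain ⟨V, hV, hVW⟩ := exists_nhds_half_neg hW
  obtain ⟨U, hU, hUV⟩ := f.exists_mem_nhds_zero_image_subset_sub (V := interior V)
    (by rw [interior_interior]; exact ⟨0, mem_interior_iff_mem_nhds.2 hV⟩)
    fun q => hf _ (isOpen_interior.preimage (continuous_add_const q))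
  refine mem_of_superset (image_mem_map hU) ?_
  rintro _ ⟨x, hx, rfl⟩
  obtain ⟨a, ha, b, hb, hab⟩ := hUV (mem_image_of_mem f hx)
  exact hab ▸ hVW a (interior_subset ha) b (interior_subset hb)

end BaireGroup

theorem AddEquiv.continuous_symm_of_continuous {G H : Type*} [TopologicalSpace G]
    [AddCommGroup G] [IsTopologicalAddGroup G] [PolishSpace G] [TopologicalSpace H]
    [AddCommGroup H] [IsTopologicalAddGroup H] [PolishSpace H] (e : G ≃+ H)
    (he : Continuous e) : Continuous e.symm := by
  borelize G H
  have hmeas : Measurable e.symm :=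
    (he.measurableEmbedding e.injective).measurable_comp_iff.1 <| by
      simpa [Function.comp_def] using measurable_id'
  exact e.symm.toAddMonoidHom.continuous_of_baireMeasurableSet_preimage fun V hV =>
    (hmeas hV.measurableSet).baireMeasurableSet

section Geometry

variable {𝕜 : Type*} [NormedField 𝕜]

theorem preimage_affine_ball {a : 𝕜} (ha : a ≠ 0) (b c : 𝕜) (ρ : ℝ) :
    (fun z => a * z + b) ⁻¹' ball c ρ = ball (a⁻¹ * (c - b)) (ρ / ‖a‖) := by
  ext w
  have : a * w + b - c = a * (w - a⁻¹ * (c - b)) := by field_simp; ring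
  rw [mem_preimage, mem_ball, mem_ball, dist_eq_norm, dist_eq_norm, this, norm_mul,
    lt_div_iff₀' (norm_pos_iff.2 ha)]

theorem ball_subset_iInter_dilation_preimage {Ω Q : Set 𝕜} {r : ℝ} (hΩ : ball 0 r ⊆ Ω) :
    ball 0 r ⊆ ⋂ c ∈ {c ∈ Q | 1 ≤ ‖c‖}, (c⁻¹ * ·) ⁻¹' Ω := by
  intro w hw
  refine mem_iInter₂.2 fun c hc => hΩ ?_
  rw [mem_ball_zero_iff] at hw ⊢
  calc ‖c⁻¹ * w‖ = ‖w‖ / ‖c‖ := by rw [norm_mul, norm_inv, inv_mul_eq_div]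
    _ ≤ ‖w‖ := div_le_self (norm_nonneg w) hc.2
    _ < r := hw

/-- A point `w` with `‖w‖ ≥ 3 / 2` lies in the dilation `c • ball 1 s` for any `c ∈ Q` close
enough to `w`. -/
theorem isBounded_iInter_dilation_preimage {Ω Q : Set 𝕜} (hQ : Dense Q) {s : ℝ} (hs : 0 < s)
    (hΩ : Disjoint (ball 1 s) Ω) :
    IsBounded (⋂ c ∈ {c ∈ Q | 1 ≤ ‖c‖}, (c⁻¹ * ·) ⁻¹' Ω) := by
  refine (isBounded_ball (x := (0 : 𝕜)) (r := 3 / 2)).subset fun w hw => ?_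
  rw [mem_ball_zero_iff]
  by_contra! hw'
  set ε := min s 1 * ‖w‖ / 3
  have hε : 0 < ε := by positivity
  obtain ⟨c, hc, hcQ⟩ := hQ.inter_open_nonempty (ball w ε) isOpen_ball ⟨w, mem_ball_self hε⟩
  have hwc : ‖w - c‖ < ε := by rwa [mem_ball, dist_comm, dist_eq_norm] at hc
  have hεs : ε ≤ s * ‖w‖ / 3 := by unfold ε; gcongr; exact min_le_left _ _
  have hε1 : ε ≤ ‖w‖ / 3 := by
    unfold ε; gcongr; exact mul_le_of_le_one_left (norm_nonneg w) (min_le_right _ _)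
  have hcw : 2 / 3 * ‖w‖ ≤ ‖c‖ := by linarith [norm_sub_norm_le w c]
  have hc0 : 0 < ‖c‖ := by linarith
  refine disjoint_left.1 hΩ (show c⁻¹ * w ∈ ball 1 s from ?_)
    (mem_iInter₂.1 hw c ⟨hcQ, by linarith⟩)
  have : c⁻¹ * w - 1 = c⁻¹ * (w - c) := by field_simp [norm_pos_iff.1 hc0]
  rw [mem_ball, dist_eq_norm, this, norm_mul, norm_inv, inv_mul_lt_iff₀ hc0]
  nlinarith

theorem exists_countable_isBounded_iInter_affine_preimage [TopologicalSpace.SeparableSpace 𝕜]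
    {Ω : Set 𝕜} (h₁ : (interior Ω).Nonempty) (h₂ : (interior Ωᶜ).Nonempty) :
    ∃ C : Set (𝕜 × 𝕜), C.Countable ∧ (∀ p ∈ C, p.1 ≠ 0) ∧
      IsBounded (⋂ p ∈ C, (fun z => p.1 * z + p.2) ⁻¹' Ω) ∧
      (interior (⋂ p ∈ C, (fun z => p.1 * z + p.2) ⁻¹' Ω)).Nonempty := by
  obtain ⟨z₀, hz₀⟩ := h₁
  obtain ⟨r, hr, hΩ₀⟩ := Metric.isOpen_iff.1 isOpen_interior z₀ hz₀
  obtain ⟨z₁, hz₁⟩ := h₂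
  obtain ⟨s, hs, hΩ₁⟩ := Metric.isOpen_iff.1 isOpen_interior z₁ hz₁
  have hd : z₁ - z₀ ≠ 0 := sub_ne_zero.2 fun h => by
    subst h
    exact interior_subset (hΩ₁ (mem_ball_self hs)) (interior_subset (hΩ₀ (mem_ball_self hr)))
  set Ω' := (fun z => (z₁ - z₀) * z + z₀) ⁻¹' Ω
  have h₀' : ball 0 (r / ‖z₁ - z₀‖) ⊆ Ω' := by
    simpa [preimage_affine_ball hd] using
      preimage_mono (f := fun z => (z₁ - z₀) * z + z₀) (hΩ₀.trans interior_subset)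
  have h₁' : Disjoint (ball 1 (s / ‖z₁ - z₀‖)) Ω' := by
    have := (disjoint_compl_left_iff_subset.2 (hΩ₁.trans interior_subset)).preimage
      (fun z => (z₁ - z₀) * z + z₀)
    simpa [preimage_affine_ball hd, hd] using this.symm
  obtain ⟨Q, hQc, hQd⟩ := TopologicalSpace.exists_countable_dense 𝕜
  have hV : ⋂ p ∈ (fun c => ((z₁ - z₀) * c⁻¹, z₀)) '' {c ∈ Q | 1 ≤ ‖c‖},
      (fun z => p.1 * z + p.2) ⁻¹' Ω = ⋂ c ∈ {c ∈ Q | 1 ≤ ‖c‖}, (c⁻¹ * ·) ⁻¹' Ω' := by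
    simp only [biInter_image, Ω', preimage_preimage, mul_assoc]
  refine ⟨_, (hQc.mono (sep_subset _ _)).image _, ?_,
    hV ▸ isBounded_iInter_dilation_preimage hQd (by positivity) h₁',
    hV ▸ ⟨0, mem_interior.2 ⟨_, ball_subset_iInter_dilation_preimage h₀', isOpen_ball,
      mem_ball_self (by positivity)⟩⟩⟩
  rintro _ ⟨c, hc, rfl⟩
  exact mul_ne_zero hd (inv_ne_zero (norm_pos_iff.1 (by linarith [hc.2])))

end Geometry

section RingEquiv

variable {R 𝕜 : Type*} [TopologicalSpace R] [Ring R] [IsTopologicalRing R]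

theorem RingEquiv.baireMeasurableSet_preimage_affine_preimage [DivisionRing 𝕜] (φ : R ≃+* 𝕜)
    {S : Set 𝕜} (hS : BaireMeasurableSet (φ ⁻¹' S)) {a : 𝕜} (ha : a ≠ 0) (b : 𝕜) :
    BaireMeasurableSet (φ ⁻¹' ((fun z => a * z + b) ⁻¹' S)) := by
  let u : Rˣ := (Units.mk0 a ha).map φ.symm.toMonoidHom
  have hu : φ ⁻¹' ((fun z => a * z + b) ⁻¹' S) = (fun x => u • x + φ.symm b) ⁻¹' (φ ⁻¹' S) := by
    ext x
    simp [u, Units.smul_def]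
  have hopen : IsOpenMap (fun x => u • x + φ.symm b) :=
    (isOpenMap_add_right _).comp (isOpenMap_smul u)
  exact hu ▸ hS.preimage (by fun_prop) hopen

theorem RingEquiv.continuous_of_isBounded_image [NontriviallyNormedField 𝕜] (φ : R ≃+* 𝕜)
    {U : Set R} (hU : U ∈ 𝓝 0) (hb : IsBounded (φ '' U)) : Continuous φ := by
  refine continuous_of_continuousAt_zero φ.toAddMonoidHom ?_
  obtain ⟨M, hM, hMU⟩ := hb.exists_pos_norm_le
  rw [ContinuousAt, map_zero, Metric.tendsto_nhds]
  intro ε hε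
  obtain ⟨t, ht0, htε⟩ := NormedField.exists_norm_lt 𝕜 (div_pos hε hM)
  have hN : (φ.symm t⁻¹ * ·) ⁻¹' U ∈ 𝓝 0 :=
    (continuous_const_mul _).continuousAt.preimage_mem_nhds (by rwa [mul_zero])
  filter_upwards [hN] with x hx
  have hx' := hMU _ (mem_image_of_mem φ hx)
  rw [map_mul, φ.apply_symm_apply, norm_mul, norm_inv, inv_mul_le_iff₀ ht0] at hx'
  rw [dist_zero_right]
  calc ‖φ x‖ ≤ ‖t‖ * M := hx'
    _ < ε := by rwa [lt_div_iff₀ hM] at htε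

end RingEquiv

theorem stmt18_general (R : Type) [TopologicalSpace R] [Ring R] [IsTopologicalRing R] [PolishSpace R]
    (φ : R ≃+* ℂ) (Ω : Set ℂ)
    (h₁ : (interior Ω).Nonempty) (h₂ : (interior Ωᶜ).Nonempty)
    (hBP : BaireMeasurableSet (⇑φ ⁻¹' Ω)) :
    Continuous ⇑φ ∧ Continuous ⇑φ.symm := by
  obtain ⟨C, hCc, hC0, hVb, hVi⟩ := exists_countable_isBounded_iInter_affine_preimage h₁ h₂
  set V := ⋂ p ∈ C, (fun z => p.1 * z + p.2) ⁻¹' Ω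
  have hV : ∀ q, BaireMeasurableSet (φ ⁻¹' ((· + q) ⁻¹' V)) := fun q => by
    simp only [V, preimage_iInter₂]
    refine .biInter hCc fun p hp => ?_
    simpa using φ.baireMeasurableSet_preimage_affine_preimage
      (φ.baireMeasurableSet_preimage_affine_preimage hBP (hC0 p hp) p.2) one_ne_zero q
  obtain ⟨U, hU, hUV⟩ := φ.toAddMonoidHom.exists_mem_nhds_zero_image_subset_sub hVi hV
  have hφ : Continuous φ := φ.continuous_of_isBounded_image hU ((hVb.sub hVb).subset hUV)
  exact ⟨hφ, φ.toAddEquiv.continuous_symm_of_continuous hφ⟩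

/-- a ring isomorphism from a Polish ring to `C` is a homeomorphism
provided some suitable Borel set has Baire-measurable preimage. -/
theorem stmt18 (R : Type) [TopologicalSpace R] [Ring R] [IsTopologicalRing R] [PolishSpace R]
    (φ : R ≃+* ℂ) (Ω : Set ℂ) (hmeas : MeasurableSet Ω)
    (h₁ : (interior Ω).Nonempty) (h₂ : (interior Ωᶜ).Nonempty)
    (hBP : BaireMeasurableSet (⇑φ ⁻¹' Ω)) :
    Continuous ⇑φ ∧ Continuous ⇑φ.symm :=
  stmt18_general R φ Ω h₁ h₂ hBP
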